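/- arXiv:1701.04883 — 4 statements merged into one kernel-verified Lean document; each statement's English description precedes it below -/
import Mathlib

section
/- Let n and x be positive integers with x ≥ √n. If the half-open interval (n/(x+1), n/x] contains at least one integer, then {n/x} − {n/(x+1)} = n/(x(x+1)) − 1. -/
theorem fract_diff_eq_sub_one_of_sqrt_le (n x : ℕ) (hn : 0 < n) (hx : 0 < x)
    (hsqrt : n ≤ x ^ 2)
    (hmem : ∃ m : ℤ, (n : ℝ) / (x + 1) < (m : ℝ) ∧ (m : ℝ) ≤ (n : ℝ) / x) :
    Int.fract ((n : ℝ) / x) - Int.fract ((n : ℝ) / (x + 1)) =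
      (n : ℝ) / (x * (x + 1)) - 1 := by
  obtain ⟨m, hm1, hm2⟩ := hmem
  have hx0 : (0:ℝ) < x := by exact_mod_cast hx
  have hx1 : (0:ℝ) < (x:ℝ) + 1 := by positivity
  have hlb : m ≤ ⌊(n:ℝ)/x⌋ := Int.le_floor.mpr hm2
  have hlb2 : ⌊(n:ℝ)/(x+1)⌋ < m := Int.floor_lt.mpr hm1
  have hnx : (n:ℝ) < x * (x+1) := by
    have : (n:ℝ) ≤ (x:ℝ)^2 := by exact_mod_cast hsqrt
    nlinarith
  have hub : (n:ℝ)/x < (((⌊(n:ℝ)/(x+1)⌋ + 2 : ℤ)) : ℝ) := by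
    have h1 : (n:ℝ)/(x+1) < ⌊(n:ℝ)/(x+1)⌋ + 1 := Int.lt_floor_add_one _
    have h2 : (n:ℝ)/x - (n:ℝ)/(x+1) < 1 := by
      rw [div_sub_div _ _ (ne_of_gt hx0) (ne_of_gt hx1)]
      rw [div_lt_one (by positivity)]
      ring_nf
      nlinarith
    push_cast
    linarith
  have hub' : ⌊(n:ℝ)/x⌋ < ⌊(n:ℝ)/(x+1)⌋ + 2 := Int.floor_lt.mpr hub
  have hfloor : ⌊(n:ℝ)/x⌋ = ⌊(n:ℝ)/(x+1)⌋ + 1 := by omega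
  unfold Int.fract
  rw [hfloor]
  have : (n:ℝ)/x - (n:ℝ)/(x+1) = (n:ℝ)/(x*(x+1)) := by
    field_simp
    ring
  push_cast
  linarith
end

section
/- For every real number s > 0, every positive integer n, and every positive integer w, the absolute value of Σ_{x=1}^{w} ({n/x} − {n/(x+1)})·x^s is at most (1 + |s−1|/s)·w^s. -/
theorem abs_partial_sum_fract_transform_pow_le (s : ℝ) (hs : 0 < s)
    (n w : ℕ) (hn : 0 < n) (hw : 0 < w) :
    |∑ x ∈ Finset.Icc 1 w,
        (Int.fract ((n : ℝ) / x) - Int.fract ((n : ℝ) / (x + 1))) * (x : ℝ) ^ s| ≤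
      (1 + |s - 1| / s) * (w : ℝ) ^ s := by
  set a : ℕ → ℝ := fun x => Int.fract ((n : ℝ) / x) with ha
  set g : ℕ → ℝ := fun x => (x : ℝ) ^ s with hgdef
  have hg0 : g 0 = 0 := by
    simp only [hgdef, Nat.cast_zero]
    exact Real.zero_rpow hs.ne'
  have hgnonneg : ∀ m : ℕ, 0 ≤ g m := fun m =>
    Real.rpow_nonneg (Nat.cast_nonneg m) s
  have hgmono : ∀ x : ℕ, g (x - 1) ≤ g x := by
    intro x
    exact Real.rpow_le_rpow (Nat.cast_nonneg _)
      (by exact_mod_cast Nat.sub_le x 1) hs.le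
  have ha01 : ∀ x : ℕ, 0 ≤ a x ∧ a x ≤ 1 := fun x =>
    ⟨Int.fract_nonneg _, (Int.fract_lt_one _).le⟩
  -- rewrite of the summand
  have hsum : ∑ x ∈ Finset.Icc 1 w,
        (Int.fract ((n : ℝ) / x) - Int.fract ((n : ℝ) / (x + 1))) * (x : ℝ) ^ s
      = ∑ x ∈ Finset.Icc 1 w, (a x - a (x + 1)) * g x := by
    apply Finset.sum_congr rfl
    intro x _
    simp [ha, hgdef, Nat.cast_add, Nat.cast_one]
  -- Abel summation identity
  have key : ∀ m : ℕ, ∑ x ∈ Finset.Icc 1 m, (a x - a (x + 1)) * g x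
      = (∑ x ∈ Finset.Icc 1 m, a x * (g x - g (x - 1))) - a (m + 1) * g m := by
    intro m
    induction m with
    | zero => simp [hg0]
    | succ k ih =>
      rw [Finset.sum_Icc_succ_top (by omega), Finset.sum_Icc_succ_top (by omega), ih,
        show k + 1 - 1 = k from rfl]
      ring
  -- telescoping
  have tel : ∀ m : ℕ, ∑ x ∈ Finset.Icc 1 m, (g x - g (x - 1)) = g m := by
    intro m
    induction m with
    | zero => simp [hg0]
    | succ k ih =>
      rw [Finset.sum_Icc_succ_top (by omega), ih, show k + 1 - 1 = k from rfl]
      ring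
  set T : ℝ := ∑ x ∈ Finset.Icc 1 w, a x * (g x - g (x - 1)) with hT
  have hT0 : 0 ≤ T := by
    apply Finset.sum_nonneg
    intro x _
    exact mul_nonneg (ha01 x).1 (by linarith [hgmono x])
  have hT1 : T ≤ g w := by
    rw [← tel w]
    apply Finset.sum_le_sum
    intro x _
    nlinarith [(ha01 x).1, (ha01 x).2, hgmono x]
  have habs : |∑ x ∈ Finset.Icc 1 w, (a x - a (x + 1)) * g x| ≤ g w := by
    rw [key w, abs_le]
    have h1 : 0 ≤ a (w + 1) * g w := mul_nonneg (ha01 (w + 1)).1 (hgnonneg w)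
    have h2 : a (w + 1) * g w ≤ g w := by
      nlinarith [(ha01 (w + 1)).2, hgnonneg w]
    constructor <;> linarith
  rw [hsum]
  have hfac : g w ≤ (1 + |s - 1| / s) * g w := by
    nlinarith [hgnonneg w, abs_nonneg (s - 1), div_nonneg (abs_nonneg (s - 1)) hs.le]
  calc |∑ x ∈ Finset.Icc 1 w, (a x - a (x + 1)) * g x| ≤ g w := habs
    _ ≤ (1 + |s - 1| / s) * g w := hfac
end

section
/- For every integer s ≥ 1 there exists a constant C > 0 such that for all integers n ≥ 1: |Σ_{x=1}^{n} {n/x}·x^s − (1/s − ζ(s+1)/(s+1))·n^{s+1}| ≤ C·n^{s+1/2}. Equivalently, (1/n^{s+1})·Σ_{x=1}^{n} {n/x}·x^s = 1/s − ζ(s+1)/(s+1) + O(n^{−1/2}) as n → ∞. -/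
/-!
Since `{n/x} x^s = n x^(s-1) - ⌊n/x⌋ x^s` and `Σ_{x ≤ n} ⌊n/x⌋ x^s = Σ_{d ≤ n} Σ_{x ≤ n/d} x^s`
(both sides run over the pairs with `x d ≤ n`), the sum is
`n Σ_{x ≤ n} x^(s-1) - Σ_{d ≤ n} Σ_{x ≤ n/d} x^s`. Inserting `Σ_{x ≤ t} x^k = t^(k+1)/(k+1) + O(t^k)`
for `t = n` and `t = n/d` leaves the main term `(1/s - Z_n/(s+1)) n^(s+1)`, where
`Z_n = Σ_{d ≤ n} d^(-s-1) = ζ(s+1) + O(1/n)`, and an error `O(n^s Σ_{d ≤ n} d^(-s)) = O(n^s log n)`.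
-/

open Finset

lemma pow_succ_sub_pow_succ_le {a b : ℝ} (k : ℕ) (hb : 0 ≤ b) (hab : b ≤ a) :
    a ^ (k + 1) - b ^ (k + 1) ≤ (k + 1) * a ^ k * (a - b) := by
  rw [← geom_sum₂_mul, add_tsub_cancel_right]
  refine mul_le_mul_of_nonneg_right ?_ (sub_nonneg.2 hab)
  calc ∑ i ∈ range (k + 1), a ^ i * b ^ (k - i)
      ≤ ∑ i ∈ range (k + 1), a ^ k := sum_le_sum fun i hi => by
        rw [mem_range] at hi
        calc a ^ i * b ^ (k - i) ≤ a ^ i * a ^ (k - i) :=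
            mul_le_mul_of_nonneg_left (pow_le_pow_left₀ hb hab _) (pow_nonneg (hb.trans hab) _)
          _ = a ^ k := by rw [← pow_add]; congr 1; omega
    _ = (k + 1) * a ^ k := by simp

lemma mul_pow_le_pow_succ_sub_pow_succ {a b : ℝ} (k : ℕ) (hb : 0 ≤ b) (hab : b ≤ a) :
    (k + 1) * b ^ k * (a - b) ≤ a ^ (k + 1) - b ^ (k + 1) := by
  rw [← geom_sum₂_mul, add_tsub_cancel_right]
  refine mul_le_mul_of_nonneg_right ?_ (sub_nonneg.2 hab)
  calc (k + 1) * b ^ k = ∑ i ∈ range (k + 1), b ^ k := by simp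
    _ ≤ ∑ i ∈ range (k + 1), a ^ i * b ^ (k - i) := sum_le_sum fun i hi => by
        rw [mem_range] at hi
        calc b ^ k = b ^ i * b ^ (k - i) := by rw [← pow_add]; congr 1; omega
          _ ≤ a ^ i * b ^ (k - i) := by gcongr

lemma sum_Icc_pow_sub_pow_succ_div_mem_Icc (k m : ℕ) :
    ∑ x ∈ Icc 1 m, (x : ℝ) ^ k - (m : ℝ) ^ (k + 1) / (k + 1) ∈ Set.Icc 0 ((m : ℝ) ^ k) := by
  induction m with
  | zero => simp
  | succ m ih =>
    have hm : (0 : ℝ) ≤ m := m.cast_nonneg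
    have hm₁ : (m : ℝ) ≤ m + 1 := by linarith
    have hk : (0 : ℝ) < k + 1 := by positivity
    set D := (((m : ℝ) + 1) ^ (k + 1) - (m : ℝ) ^ (k + 1)) / (k + 1)
    have hD₀ : (m : ℝ) ^ k ≤ D := by
      rw [le_div_iff₀ hk]
      linarith [mul_pow_le_pow_succ_sub_pow_succ k hm hm₁]
    have hD₁ : D ≤ ((m : ℝ) + 1) ^ k := by
      rw [div_le_iff₀ hk]
      linarith [pow_succ_sub_pow_succ_le k hm hm₁]
    rw [Set.mem_Icc] at ih ⊢
    rw [sum_Icc_succ_top (by omega), Nat.cast_succ,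
      show ∀ S : ℝ, S + ((m : ℝ) + 1) ^ k - ((m : ℝ) + 1) ^ (k + 1) / (k + 1)
        = S - (m : ℝ) ^ (k + 1) / (k + 1) + (((m : ℝ) + 1) ^ k - D) from fun S => by ring]
    constructor <;> linarith

lemma abs_sum_Icc_floor_pow_sub_le (k : ℕ) {t : ℝ} (ht : 0 ≤ t) :
    |∑ x ∈ Icc 1 ⌊t⌋₊, (x : ℝ) ^ k - t ^ (k + 1) / (k + 1)| ≤ t ^ k := by
  set m := ⌊t⌋₊
  have hm : (m : ℝ) ≤ t := Nat.floor_le ht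
  have hgap : t - m ≤ 1 := by linarith [Nat.lt_floor_add_one t]
  obtain ⟨hE₀, hE₁⟩ := sum_Icc_pow_sub_pow_succ_div_mem_Icc k m
  have hk : (0 : ℝ) < k + 1 := by positivity
  have hD₀ : (m : ℝ) ^ (k + 1) / (k + 1) ≤ t ^ (k + 1) / (k + 1) := by gcongr
  have hD₁ : t ^ (k + 1) / (k + 1) - (m : ℝ) ^ (k + 1) / (k + 1) ≤ t ^ k := by
    rw [← sub_div, div_le_iff₀ hk]
    calc t ^ (k + 1) - (m : ℝ) ^ (k + 1) ≤ (k + 1) * t ^ k * (t - m) :=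
          pow_succ_sub_pow_succ_le k m.cast_nonneg hm
      _ ≤ (k + 1) * t ^ k * 1 := by gcongr
      _ = t ^ k * (k + 1) := by ring
  have hmt : (m : ℝ) ^ k ≤ t ^ k := by gcongr
  rw [abs_le]
  constructor <;> linarith

lemma sum_Icc_div_nsmul_eq_sum_sum_Icc_div {M : Type*} [AddCommMonoid M] (f : ℕ → M) (n : ℕ) :
    ∑ x ∈ Icc 1 n, (n / x) • f x = ∑ d ∈ Icc 1 n, ∑ x ∈ Icc 1 (n / d), f x := by
  have hcard : ∀ x, (n / x) • f x = ∑ _d ∈ Icc 1 (n / x), f x := fun x => by simp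
  simp_rw [hcard]
  refine sum_comm' fun x d => ?_
  have hdiv : ∀ a b, 1 ≤ a → (b ≤ n / a ↔ a * b ≤ n) := fun a b ha => by
    rw [Nat.le_div_iff_mul_le ha, mul_comm]
  simp only [mem_Icc]
  constructor
  · rintro ⟨⟨hx, -⟩, hd, hdx⟩
    rw [hdiv x d hx] at hdx
    exact ⟨⟨hx, (hdiv d x hd).2 (by linarith)⟩, hd, hdx.trans' (Nat.le_mul_of_pos_left d hx)⟩
  · rintro ⟨⟨hx, hxd⟩, hd, -⟩
    rw [hdiv d x hd] at hxd
    exact ⟨⟨hx, hxd.trans' (Nat.le_mul_of_pos_left x hd)⟩, hd, (hdiv x d hx).2 (by linarith)⟩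

lemma sum_fract_div_mul_pow_succ_eq (k n : ℕ) :
    ∑ x ∈ Icc 1 n, Int.fract ((n : ℝ) / x) * (x : ℝ) ^ (k + 1) =
      n * ∑ x ∈ Icc 1 n, (x : ℝ) ^ k - ∑ d ∈ Icc 1 n, ∑ x ∈ Icc 1 (n / d), (x : ℝ) ^ (k + 1) := by
  rw [← sum_Icc_div_nsmul_eq_sum_sum_Icc_div, mul_sum, ← sum_sub_distrib]
  refine sum_congr rfl fun x hx => ?_
  have hx : (x : ℝ) ≠ 0 := by have := (mem_Icc.1 hx).1; positivity
  have hmod : ((n % x : ℕ) : ℝ) = n - x * (n / x : ℕ) := by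
    rw [eq_sub_iff_add_eq, ← Nat.cast_mul, ← Nat.cast_add, Nat.mod_add_div]
  rw [Int.fract_div_natCast_eq_div_natCast_mod, hmod, nsmul_eq_mul]
  field_simp
  ring

lemma sum_Icc_one_div_pow_le_two_mul_sqrt {k : ℕ} (hk : 1 ≤ k) (n : ℕ) :
    ∑ d ∈ Icc 1 n, 1 / (d : ℝ) ^ k ≤ 2 * √n := by
  rcases n.eq_zero_or_pos with rfl | hn
  · simp
  calc ∑ d ∈ Icc 1 n, 1 / (d : ℝ) ^ k ≤ ∑ d ∈ Icc 1 n, (d : ℝ)⁻¹ := sum_le_sum fun d hd => by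
        have hd : (1 : ℝ) ≤ d := by exact_mod_cast (mem_Icc.1 hd).1
        rw [one_div]
        exact inv_anti₀ (by positivity) (le_self_pow₀ hd (by omega))
    _ = harmonic n := by simp [harmonic_eq_sum_Icc]
    _ ≤ 1 + Real.log n := harmonic_le_one_add_log n
    _ ≤ 2 * √n := by
      have hlog : Real.log n / 2 ≤ √n - 1 := by
        rw [← Real.log_sqrt n.cast_nonneg]
        exact Real.log_le_sub_one_of_pos (by positivity)
      linarith

lemma abs_sum_sum_Icc_div_pow_sub_le (k n : ℕ) :
    |∑ d ∈ Icc 1 n,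
        (∑ x ∈ Icc 1 (n / d), (x : ℝ) ^ (k + 1) - ((n : ℝ) / d) ^ (k + 2) / (k + 2))| ≤
      2 * ((n : ℝ) ^ (k + 1) * √n) := by
  calc _ ≤ ∑ d ∈ Icc 1 n, ((n : ℝ) / d) ^ (k + 1) := by
        refine (abs_sum_le_sum_abs _ _).trans (sum_le_sum fun d _ => ?_)
        have h := abs_sum_Icc_floor_pow_sub_le (k + 1) (t := (n : ℝ) / d) (by positivity)
        rw [Nat.floor_div_natCast, Nat.floor_natCast] at h
        simpa only [Nat.cast_succ, add_assoc, one_add_one_eq_two] using h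
    _ = (n : ℝ) ^ (k + 1) * ∑ d ∈ Icc 1 n, 1 / (d : ℝ) ^ (k + 1) := by
        simp only [mul_sum, div_pow, mul_one_div]
    _ ≤ (n : ℝ) ^ (k + 1) * (2 * √n) := by
        gcongr
        exact sum_Icc_one_div_pow_le_two_mul_sqrt (by omega) n
    _ = 2 * ((n : ℝ) ^ (k + 1) * √n) := by ring

lemma riemannZeta_natCast_eq_ofReal_tsum {p : ℕ} (hp : 1 < p) :
    riemannZeta p = ((∑' d : ℕ, 1 / (d : ℝ) ^ p : ℝ) : ℂ) := by
  rw [zeta_nat_eq_tsum_of_gt_one hp, Complex.ofReal_tsum]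
  push_cast
  rfl

lemma tsum_one_div_pow_sub_sum_Icc_le {p : ℕ} (hp : 2 ≤ p) {n : ℕ} (hn : n ≠ 0) :
    ∑' d : ℕ, 1 / (d : ℝ) ^ p - ∑ d ∈ Icc 1 n, 1 / (d : ℝ) ^ p ≤ 1 / n := by
  rw [sub_le_iff_le_add']
  refine Real.tsum_le_of_sum_range_le (fun d => by positivity) fun N => ?_
  calc ∑ d ∈ range N, 1 / (d : ℝ) ^ p ≤ ∑ d ∈ range (n + N + 1), 1 / (d : ℝ) ^ p :=
        sum_le_sum_of_subset_of_nonneg (range_subset_range.2 (by omega)) fun _ _ _ => by positivity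
    _ = ∑ d ∈ Icc 1 n, 1 / (d : ℝ) ^ p + ∑ d ∈ Ioc n (n + N), 1 / (d : ℝ) ^ p := by
        rw [Nat.range_succ_eq_Icc_zero, Icc_eq_cons_Ioc (Nat.zero_le _), sum_cons,
          ← sum_Ioc_consecutive _ (Nat.zero_le n) (Nat.le_add_right n N),
          ← Icc_add_one_left_eq_Ioc, zero_add]
        simp [show p ≠ 0 by omega]
    _ ≤ ∑ d ∈ Icc 1 n, 1 / (d : ℝ) ^ p + 1 / n := by
        gcongr
        calc ∑ d ∈ Ioc n (n + N), 1 / (d : ℝ) ^ p ≤ ∑ d ∈ Ioc n (n + N), ((d : ℝ) ^ 2)⁻¹ :=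
              sum_le_sum fun d hd => by
                have hd : (1 : ℝ) ≤ d := by exact_mod_cast (show 1 ≤ d by grind)
                rw [one_div]
                exact inv_anti₀ (by positivity) (pow_le_pow_right₀ hd hp)
          _ ≤ (n : ℝ)⁻¹ - ((n + N : ℕ) : ℝ)⁻¹ := sum_Ioc_inv_sq_le_sub hn (by omega)
          _ ≤ 1 / n := by
            rw [one_div]; exact sub_le_self _ (by positivity)

lemma abs_sum_fract_div_mul_pow_sub_le (k : ℕ) {n : ℕ} (hn : n ≠ 0) :
    |∑ x ∈ Icc 1 n, Int.fract ((n : ℝ) / x) * (x : ℝ) ^ (k + 1) -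
        (1 / (k + 1) - (∑' d : ℕ, 1 / (d : ℝ) ^ (k + 2)) / (k + 2)) * (n : ℝ) ^ (k + 2)| ≤
      4 * ((n : ℝ) ^ (k + 1) * √n) := by
  set N : ℝ := (n : ℝ)
  set z := ∑' d : ℕ, 1 / (d : ℝ) ^ (k + 2)
  set P := ∑ d ∈ Icc 1 n, 1 / (d : ℝ) ^ (k + 2)
  set A := N * ∑ x ∈ Icc 1 n, (x : ℝ) ^ k - N ^ (k + 2) / (k + 1)
  set T := ∑ d ∈ Icc 1 n, (∑ x ∈ Icc 1 (n / d), (x : ℝ) ^ (k + 1) - (N / d) ^ (k + 2) / (k + 2))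
  set Z := N ^ (k + 2) / (k + 2) * (z - P)
  have hsplit : ∑ x ∈ Icc 1 n, Int.fract (N / x) * (x : ℝ) ^ (k + 1) -
      (1 / (k + 1) - z / (k + 2)) * N ^ (k + 2) = A - T + Z := by
    have hP : ∑ d ∈ Icc 1 n, (N / d) ^ (k + 2) / (k + 2) = N ^ (k + 2) / (k + 2) * P := by
      simp only [P, mul_sum, div_pow]
      exact sum_congr rfl fun d _ => by ring
    rw [sum_fract_div_mul_pow_succ_eq]
    simp only [A, T, Z, sum_sub_distrib, hP]
    ring
  have hN : 1 ≤ N := Nat.one_le_cast.2 (Nat.one_le_iff_ne_zero.2 hn)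
  have hA : |A| ≤ N ^ (k + 1) := by
    have h := abs_sum_Icc_floor_pow_sub_le k (t := N) (by positivity)
    rw [Nat.floor_natCast] at h
    rw [show A = N * (∑ x ∈ Icc 1 n, (x : ℝ) ^ k - N ^ (k + 1) / (k + 1)) by ring,
      abs_mul, abs_of_nonneg (by positivity : 0 ≤ N)]
    exact (mul_le_mul_of_nonneg_left h (by positivity)).trans_eq (pow_succ' N k).symm
  have hT : |T| ≤ 2 * (N ^ (k + 1) * √n) := abs_sum_sum_Icc_div_pow_sub_le k n
  have hZ : |Z| ≤ N ^ (k + 1) := by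
    have hzP : 0 ≤ z - P := sub_nonneg.2 <|
      (Real.summable_one_div_nat_pow.2 (by omega)).sum_le_tsum _ fun d _ => by positivity
    rw [abs_of_nonneg (mul_nonneg (by positivity) hzP)]
    calc N ^ (k + 2) / (k + 2) * (z - P) ≤ N ^ (k + 2) * (1 / N) := by
          gcongr
          · exact div_le_self (by positivity) (by linarith)
          · exact tsum_one_div_pow_sub_sum_Icc_le (by omega) hn
      _ = N ^ (k + 1) := by field_simp; ring
  have hsqrt : 1 ≤ √N := Real.one_le_sqrt.2 hN
  rw [hsplit]
  calc |A - T + Z| ≤ |A| + |T| + |Z| := (abs_add_le _ _).trans (add_le_add_left (abs_sub _ _) _)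
    _ ≤ N ^ (k + 1) + 2 * (N ^ (k + 1) * √n) + N ^ (k + 1) := by gcongr
    _ ≤ 4 * (N ^ (k + 1) * √n) := by nlinarith [pow_nonneg (zero_le_one.trans hN) (k + 1)]

theorem sum_fract_mul_pow_asymptotic (s : ℕ) (hs : 1 ≤ s) :
    ∃ C : ℝ, 0 < C ∧ ∀ n : ℕ, 1 ≤ n →
      ‖((∑ x ∈ Finset.Icc 1 n,
            Int.fract ((n : ℝ) / x) * (x : ℝ) ^ s : ℝ) : ℂ) -
          (1 / (s : ℂ) - riemannZeta ((s : ℂ) + 1) / ((s : ℂ) + 1)) *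
            (((n : ℝ) ^ (s + 1) : ℝ) : ℂ)‖ ≤
        C * (n : ℝ) ^ ((s : ℝ) + 1 / 2) := by
  obtain ⟨k, rfl⟩ := Nat.exists_eq_add_of_le' hs
  refine ⟨4, by norm_num, fun n hn => ?_⟩
  have hzeta : riemannZeta (((k + 1 : ℕ) : ℂ) + 1) =
      ((∑' d : ℕ, 1 / (d : ℝ) ^ (k + 2) : ℝ) : ℂ) := by
    rw [← riemannZeta_natCast_eq_ofReal_tsum (by omega : 1 < k + 2)]
    push_cast
    ring_nf
  have hrpow : (n : ℝ) ^ (((k + 1 : ℕ) : ℝ) + 1 / 2) = (n : ℝ) ^ (k + 1) * √n := by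
    rw [Real.rpow_add (by positivity), Real.rpow_natCast, Real.sqrt_eq_rpow]
  rw [hzeta, hrpow]
  convert abs_sum_fract_div_mul_pow_sub_le k (n := n) (by omega) using 1
  rw [← Real.norm_eq_abs, ← Complex.norm_real]
  congr 1
  push_cast
  ring
end

section
/- There exists a constant C > 0 such that for all integers n ≥ 1: |Σ_{x=1}^{n} {n/x} − (1 − γ)·n| ≤ C·√n, where γ is the Euler–Mascheroni constant. Equivalently, (1/n)·Σ_{x=1}^{n} {n/x} = 1 − γ + O(n^{−1/2}) as n → ∞ (Dirichlet's theorem). -/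
/-!
Dirichlet's hyperbola method. Since `{n/x} = n/x - ⌊n/x⌋`, the sum equals `n H_n - D(n)`, where
`D(n) = ∑_{x ≤ n} ⌊n/x⌋` counts the lattice points `x, y ≥ 1` with `xy ≤ n`. Splitting these
points at `K = ⌊√n⌋` gives `D(n) = 2 ∑_{x ≤ K} ⌊n/x⌋ - K²`, and writing `⌊n/x⌋ = n/x - {n/x}`
once more turns the sum into `n H_n - 2n H_K + K² + 2 ∑_{x ≤ K} {n/x}`, whose last term is
`O(K)`. Finally `H_m = log m + γ + O(1/m)` and `n log (n/K²) = n - K² + O(1)` show that this is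
`(1 - γ) n + O(K)`.
-/

open Finset Real

namespace Nat

theorem filter_mul_le_Ioc {x : ℕ} (hx : 0 < x) (n a b : ℕ) :
    {y ∈ Ioc a b | x * y ≤ n} = Ioc a (min b (n / x)) := by
  ext y
  simp only [mem_filter, mem_Ioc, le_min_iff, Nat.le_div_iff_mul_le hx, mul_comm x]
  tauto

theorem card_filter_mul_le_Ioc {x : ℕ} (hx : 0 < x) (n a b : ℕ) :
    #{y ∈ Ioc a b | x * y ≤ n} = min b (n / x) - a := by
  rw [filter_mul_le_Ioc hx, card_Ioc]

theorem sqrt_le_div {n y : ℕ} (hy₀ : 0 < y) (hy : y ≤ n.sqrt) : n.sqrt ≤ n / y := by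
  rw [Nat.le_div_iff_mul_le hy₀]
  exact (Nat.mul_le_mul_left _ hy).trans (Nat.sqrt_le n)

theorem div_le_sqrt {n x : ℕ} (hx : n.sqrt < x) : n / x ≤ n.sqrt := by
  rw [Nat.lt_iff_add_one_le] at hx
  refine Nat.le_of_lt_succ ((Nat.div_lt_iff_lt_mul (by omega)).2 ?_)
  exact (Nat.lt_succ_sqrt n).trans_le (Nat.mul_le_mul_left _ hx)

theorem sum_Ioc_sqrt_div_add_sqrt_mul_sqrt (n : ℕ) :
    ∑ x ∈ Ioc n.sqrt n, n / x + n.sqrt * n.sqrt = ∑ y ∈ Ioc 0 n.sqrt, n / y := by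
  have hcount : ∑ x ∈ Ioc n.sqrt n, n / x = ∑ y ∈ Ioc 0 n.sqrt, (n / y - n.sqrt) := calc
    ∑ x ∈ Ioc n.sqrt n, n / x = ∑ x ∈ Ioc n.sqrt n, #{y ∈ Ioc 0 n.sqrt | x * y ≤ n} := by
      refine sum_congr rfl fun x hx => ?_
      rw [mem_Ioc] at hx
      rw [card_filter_mul_le_Ioc (by omega), min_eq_right (div_le_sqrt hx.1), Nat.sub_zero]
    _ = ∑ y ∈ Ioc 0 n.sqrt, #{x ∈ Ioc n.sqrt n | y * x ≤ n} := by
      simp only [card_filter]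
      rw [sum_comm]
      exact sum_congr rfl fun y _ => sum_congr rfl fun x _ => by rw [mul_comm]
    _ = ∑ y ∈ Ioc 0 n.sqrt, (n / y - n.sqrt) := by
      refine sum_congr rfl fun y hy => ?_
      rw [card_filter_mul_le_Ioc (mem_Ioc.1 hy).1, min_eq_right (Nat.div_le_self n y)]
  have hconst : ∑ _y ∈ Ioc 0 n.sqrt, n.sqrt = n.sqrt * n.sqrt := by simp
  rw [hcount, ← hconst, ← sum_add_distrib]
  refine sum_congr rfl fun y hy => ?_
  rw [mem_Ioc] at hy
  exact Nat.sub_add_cancel (sqrt_le_div hy.1 hy.2)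

theorem sum_Ioc_div_add_sqrt_mul_sqrt (n : ℕ) :
    ∑ x ∈ Ioc 0 n, n / x + n.sqrt * n.sqrt = 2 * ∑ x ∈ Ioc 0 n.sqrt, n / x := by
  rw [← sum_Ioc_consecutive _ (Nat.zero_le _) (Nat.sqrt_le_self n), add_assoc,
    sum_Ioc_sqrt_div_add_sqrt_mul_sqrt, two_mul]

end Nat

section LinearOrderedField

variable {α : Type*} [Field α] [LinearOrder α] [IsStrictOrderedRing α] [FloorRing α]

theorem Int.fract_natCast_div_natCast (n x : ℕ) :
    Int.fract ((n : α) / x) = n / x - (n / x : ℕ) := by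
  rw [← Int.self_sub_floor, ← natCast_floor_eq_intCast_floor (by positivity),
    Nat.floor_div_eq_div]

theorem sum_Ioc_fract_div (n m : ℕ) :
    ∑ x ∈ Ioc 0 m, Int.fract ((n : α) / x)
      = n * harmonic m - ∑ x ∈ Ioc 0 m, ((n / x : ℕ) : α) := by
  have hIcc : Icc 1 m = Ioc 0 m := Icc_add_one_left_eq_Ioc 0 m
  rw [harmonic_eq_sum_Icc, hIcc, Rat.cast_sum, mul_sum, ← sum_sub_distrib]
  refine sum_congr rfl fun x _ => ?_
  rw [Int.fract_natCast_div_natCast, Rat.cast_inv, Rat.cast_natCast, div_eq_mul_inv]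

end LinearOrderedField

theorem sum_Ioc_fract_div_eq (n : ℕ) :
    ∑ x ∈ Ioc 0 n, Int.fract ((n : ℝ) / x) = n * harmonic n - 2 * n * harmonic n.sqrt
      + n.sqrt * n.sqrt + 2 * ∑ x ∈ Ioc 0 n.sqrt, Int.fract ((n : ℝ) / x) := by
  have hhyperbola : ∑ x ∈ Ioc 0 n, ((n / x : ℕ) : ℝ) + n.sqrt * n.sqrt
      = 2 * ∑ x ∈ Ioc 0 n.sqrt, ((n / x : ℕ) : ℝ) := by
    exact_mod_cast Nat.sum_Ioc_div_add_sqrt_mul_sqrt n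
  rw [sum_Ioc_fract_div, sum_Ioc_fract_div]
  linarith

theorem abs_harmonic_sub_log_sub_eulerMascheroniConstant_le {m : ℕ} (hm : m ≠ 0) :
    |harmonic m - log m - eulerMascheroniConstant| ≤ 1 / m := by
  have hlow := eulerMascheroniConstant_lt_eulerMascheroniSeq' m
  have hup := eulerMascheroniSeq_lt_eulerMascheroniConstant m
  rw [eulerMascheroniSeq', if_neg hm] at hlow
  rw [eulerMascheroniSeq] at hup
  have hm' : (0 : ℝ) < m := by positivity
  have hlog : log (m + 1) - log m ≤ 1 / m := by
    rw [← log_div (by positivity) hm'.ne']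
    calc log ((m + 1) / m) ≤ (m + 1) / m - 1 := log_le_sub_one_of_pos (by positivity)
      _ = 1 / m := by field_simp; ring
  rw [abs_le]
  constructor <;> linarith

theorem abs_mul_log_div_sub_sub_le {a b : ℝ} (ha : 0 < a) (hab : a ≤ b) :
    |b * log (b / a) - (b - a)| ≤ (b - a) ^ 2 / a := by
  have hb : 0 < b := ha.trans_le hab
  have hlow : b - a ≤ b * log (b / a) := calc
    b - a = b * (1 - (b / a)⁻¹) := by field_simp
    _ ≤ b * log (b / a) :=
      mul_le_mul_of_nonneg_left (one_sub_inv_le_log_of_pos (by positivity)) hb.le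
  have hup : b * log (b / a) ≤ b - a + (b - a) ^ 2 / a := calc
    b * log (b / a) ≤ b * (b / a - 1) :=
      mul_le_mul_of_nonneg_left (log_le_sub_one_of_pos (by positivity)) hb.le
    _ = b - a + (b - a) ^ 2 / a := by field_simp; ring
  rw [abs_of_nonneg (sub_nonneg.2 hlow)]
  linarith

theorem sum_Ioc_fract_div_sub_eq {n : ℕ} (hn : n ≠ 0) :
    ∑ x ∈ Ioc 0 n, Int.fract ((n : ℝ) / x) - (1 - eulerMascheroniConstant) * n
      = n * (harmonic n - log n - eulerMascheroniConstant)
        - 2 * n * (harmonic n.sqrt - log n.sqrt - eulerMascheroniConstant)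
        + (n * log (n / (n.sqrt * n.sqrt)) - (n - n.sqrt * n.sqrt))
        + 2 * ∑ x ∈ Ioc 0 n.sqrt, Int.fract ((n : ℝ) / x) := by
  have hK : (n.sqrt : ℝ) ≠ 0 := by exact_mod_cast (Nat.sqrt_pos.2 (Nat.pos_of_ne_zero hn)).ne'
  rw [sum_Ioc_fract_div_eq, log_div (by positivity) (mul_ne_zero hK hK), log_mul hK hK]
  ring

theorem abs_sum_Ioc_fract_div_sub_le {n : ℕ} (hn : n ≠ 0) :
    |∑ x ∈ Ioc 0 n, Int.fract ((n : ℝ) / x) - (1 - eulerMascheroniConstant) * n|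
      ≤ 5 + 8 * n.sqrt := by
  have hK : 0 < n.sqrt := Nat.sqrt_pos.2 (Nat.pos_of_ne_zero hn)
  have hK' : (1 : ℝ) ≤ n.sqrt := by exact_mod_cast hK
  have hn' : (0 : ℝ) < n := by exact_mod_cast Nat.pos_of_ne_zero hn
  have hKn : (n.sqrt : ℝ) * n.sqrt ≤ n := by exact_mod_cast Nat.sqrt_le n
  have hnK : (n : ℝ) ≤ n.sqrt * n.sqrt + 2 * n.sqrt := by
    have := Nat.sqrt_le_add n
    exact_mod_cast (by omega : n ≤ n.sqrt * n.sqrt + 2 * n.sqrt)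
  have hmain : |n * (harmonic n - log n - eulerMascheroniConstant)| ≤ 1 := by
    rw [abs_mul, abs_of_pos hn']
    calc (n : ℝ) * _ ≤ n * (1 / n) := mul_le_mul_of_nonneg_left
          (abs_harmonic_sub_log_sub_eulerMascheroniConstant_le hn) hn'.le
      _ = 1 := by field_simp
  have hsqrt :
      |2 * n * (harmonic n.sqrt - log n.sqrt - eulerMascheroniConstant)| ≤ 6 * n.sqrt := by
    rw [abs_mul, abs_of_pos (by positivity)]
    calc 2 * (n : ℝ) * _ ≤ 2 * n * (1 / n.sqrt) := mul_le_mul_of_nonneg_left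
          (abs_harmonic_sub_log_sub_eulerMascheroniConstant_le hK.ne') (by positivity)
      _ ≤ 6 * n.sqrt := by
          rw [mul_one_div, div_le_iff₀ (by positivity)]
          nlinarith
  have hlog : |n * log (n / (n.sqrt * n.sqrt)) - (n - n.sqrt * n.sqrt)| ≤ 4 := by
    refine (abs_mul_log_div_sub_sub_le (by positivity) hKn).trans ?_
    rw [div_le_iff₀ (by positivity)]
    nlinarith
  have hfract_nonneg : 0 ≤ ∑ x ∈ Ioc 0 n.sqrt, Int.fract ((n : ℝ) / x) :=
    sum_nonneg fun x _ => Int.fract_nonneg _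
  have hfract_le : ∑ x ∈ Ioc 0 n.sqrt, Int.fract ((n : ℝ) / x) ≤ n.sqrt := by
    simpa using sum_le_card_nsmul (Ioc 0 n.sqrt) (fun x : ℕ => Int.fract ((n : ℝ) / x)) 1
      fun x _ => (Int.fract_lt_one _).le
  rw [sum_Ioc_fract_div_sub_eq hn]
  rw [abs_le] at hmain hsqrt hlog ⊢
  constructor <;> linarith [hmain.1, hmain.2, hsqrt.1, hsqrt.2, hlog.1, hlog.2]

theorem dirichlet_sum_fract (γ : ℝ) (hγ : γ = Real.eulerMascheroniConstant) :
    ∃ C : ℝ, 0 < C ∧ ∀ n : ℕ, 1 ≤ n →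
      |(∑ x ∈ Finset.Icc 1 n, Int.fract ((n : ℝ) / x)) - (1 - γ) * (n : ℝ)| ≤
        C * Real.sqrt n := by
  refine ⟨13, by norm_num, fun n hn => ?_⟩
  have hIcc : Icc 1 n = Ioc 0 n := Icc_add_one_left_eq_Ioc 0 n
  have hsqrt : (n.sqrt : ℝ) ≤ √n := Real.nat_sqrt_le_real_sqrt
  have hone : (1 : ℝ) ≤ √n := Real.one_le_sqrt.2 (by exact_mod_cast hn)
  rw [hγ, hIcc]
  calc _ ≤ 5 + 8 * (n.sqrt : ℝ) := abs_sum_Ioc_fract_div_sub_le (by omega)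
    _ ≤ 13 * √n := by linarith
end
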